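/- arXiv:2512.10929 — 3 statements merged into one kernel-verified Lean document; each statement's English description precedes it below -/
import Mathlib

section
/- For any n-qubit pure state |φ⟩ and λ ∈ [0,1], tr(|φ⟩⟨φ|^{⊗2} · (D_λ^{⊗n} ⊗ D_λ^{⊗n})(SWAP_n)) ≤ (1 − λ + λ²/2)^n, where SWAP_n is the n-fold tensor product of single-qubit swaps between the two copies. -/
/-!
Both `SWAP_n` and its depolarized image factorize over the pairs of qubits `(inl k, inr k)`. On one
pair, the operators `t • SWAP + ((1 - t) / 2) • 1` have partial trace `1` over either qubit, so the
depolarizing channel on either qubit maps this family into itself, with `t ↦ (1 - λ) t`. Hence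
`(D_λ^{⊗n} ⊗ D_λ^{⊗n})(SWAP_n) = ⨂_k ((1 - λ)² SWAP + (λ(2 - λ)/2) 1)
  = ∑_T (1 - λ)^{2|T|} (λ(2 - λ)/2)^{n - |T|} SWAP_T`,
a nonnegative combination of partial swaps whose coefficients sum to `(1 - λ + λ²/2)^n`. Each
`SWAP_T` permutes the computational basis, so `⟨φ ⊗ φ| SWAP_T |φ ⊗ φ⟩ ≤ ‖φ ⊗ φ‖² = 1`.
-/

open Matrix

/-- The single-qubit depolarizing channel of strength `lam` applied to qubit `i`
of a register of qubits indexed by `ι`: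
`D_λ at i (M) = (1−λ)·M + (λ/2)·(I_i ⊗ tr_i M)`. -/
noncomputable def depolAt {ι : Type} [DecidableEq ι] [Fintype ι] (lam : ℝ) (i : ι)
    (M : Matrix (ι → Fin 2) (ι → Fin 2) ℂ) : Matrix (ι → Fin 2) (ι → Fin 2) ℂ :=
  ((1 - lam : ℝ) : ℂ) • M + ((lam / 2 : ℝ) : ℂ) •
    Matrix.of (fun x y =>
      if x i = y i then ∑ b : Fin 2, M (Function.update x i b) (Function.update y i b) else 0)

/-- The tensor-product depolarizing channel `D_λ^{⊗ι}`, applying the single-qubit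
depolarizing channel to every qubit of the register. -/
noncomputable def depolAll {ι : Type} [DecidableEq ι] [Fintype ι] (lam : ℝ)
    (M : Matrix (ι → Fin 2) (ι → Fin 2) ℂ) : Matrix (ι → Fin 2) (ι → Fin 2) ℂ :=
  (Finset.univ : Finset ι).toList.foldl (fun N i => depolAt lam i N) M

/-- `SWAP_n`, the operator exchanging two copies of the `n`-qubit register
(qubit `inl i` of the first copy is swapped with qubit `inr i` of the second). -/
noncomputable def swapN (n : ℕ) :
    Matrix ((Fin n ⊕ Fin n) → Fin 2) ((Fin n ⊕ Fin n) → Fin 2) ℂ :=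
  Matrix.of fun x y => if x = y ∘ Sum.swap then 1 else 0

/-- Two copies of the pure state `|φ⟩⟨φ|`, i.e. `|φ⟩⟨φ|^{⊗2}`, as an operator on
the doubled register. -/
noncomputable def pureTwoCopies {n : ℕ} (φ : (Fin n → Fin 2) → ℂ) :
    Matrix ((Fin n ⊕ Fin n) → Fin 2) ((Fin n ⊕ Fin n) → Fin 2) ℂ :=
  Matrix.of fun x y =>
    (φ (x ∘ Sum.inl) * star (φ (y ∘ Sum.inl))) * (φ (x ∘ Sum.inr) * star (φ (y ∘ Sum.inr)))

open Finset

/-- Entry `((a, b), (c, d))` of `t • SWAP + ((1 - t) / 2) • 1` on one pair of qubits. -/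
noncomputable def swapMixEntry (t : ℝ) (a b c d : Fin 2) : ℂ :=
  (t : ℂ) * (if a = d ∧ b = c then 1 else 0)
    + (((1 - t) / 2 : ℝ) : ℂ) * (if a = c ∧ b = d then 1 else 0)

lemma swapMixEntry_depol_left (lam t : ℝ) (a b c d : Fin 2) :
    ((1 - lam : ℝ) : ℂ) * swapMixEntry t a b c d
      + ((lam / 2 : ℝ) : ℂ) * (if a = c then ∑ e, swapMixEntry t e b e d else 0)
    = swapMixEntry ((1 - lam) * t) a b c d := by
  fin_cases a <;> fin_cases b <;> fin_cases c <;> fin_cases d <;>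
    simp [swapMixEntry, Fin.sum_univ_two] <;> ring

lemma swapMixEntry_depol_right (lam t : ℝ) (a b c d : Fin 2) :
    ((1 - lam : ℝ) : ℂ) * swapMixEntry t a b c d
      + ((lam / 2 : ℝ) : ℂ) * (if b = d then ∑ e, swapMixEntry t a e c e else 0)
    = swapMixEntry ((1 - lam) * t) a b c d := by
  fin_cases a <;> fin_cases b <;> fin_cases c <;> fin_cases d <;>
    simp [swapMixEntry, Fin.sum_univ_two] <;> ring

section

variable {ι : Type} [DecidableEq ι]

def partialSwapSites (T : Finset ι) (i : ι ⊕ ι) : ι ⊕ ι :=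
  if i.elim id id ∈ T then i.swap else i

lemma partialSwapSites_involutive (T : Finset ι) : Function.Involutive (partialSwapSites T) := by
  intro i
  by_cases h : i.elim id id ∈ T <;> cases i <;> simp_all [partialSwapSites]

variable [Fintype ι]

noncomputable def swapMix (t : ι → ℝ) : Matrix ((ι ⊕ ι) → Fin 2) ((ι ⊕ ι) → Fin 2) ℂ :=
  of fun x y => ∏ k, swapMixEntry (t k) (x (.inl k)) (x (.inr k)) (y (.inl k)) (y (.inr k))

lemma depolAt_swapMix (lam : ℝ) (t : ι → ℝ) (i : ι ⊕ ι) :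
    depolAt lam i (swapMix t) =
      swapMix (Function.update t (i.elim id id) ((1 - lam) * t (i.elim id id))) := by
  set k₀ := i.elim id id
  ext x y
  set rest := ∏ k ∈ univ.erase k₀,
    swapMixEntry (t k) (x (.inl k)) (x (.inr k)) (y (.inl k)) (y (.inr k))
  have hsite : ∀ k ≠ k₀, Sum.inl k ≠ i ∧ Sum.inr k ≠ i := by
    rintro k hk
    cases i <;> simp_all [k₀, eq_comm]
  have hsplit : ∀ (t' : ι → ℝ) (x' y' : (ι ⊕ ι) → Fin 2),
      (∀ k ≠ k₀, t' k = t k ∧ x' (.inl k) = x (.inl k) ∧ x' (.inr k) = x (.inr k) ∧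
        y' (.inl k) = y (.inl k) ∧ y' (.inr k) = y (.inr k)) →
      swapMix t' x' y'
        = swapMixEntry (t' k₀) (x' (.inl k₀)) (x' (.inr k₀)) (y' (.inl k₀)) (y' (.inr k₀)) * rest := by
    intro t' x' y' h
    rw [swapMix, of_apply, ← mul_prod_erase _ _ (mem_univ k₀)]
    congr 1
    refine prod_congr rfl fun k hk => ?_
    obtain ⟨h0, h1, h2, h3, h4⟩ := h k (ne_of_mem_erase hk)
    rw [h0, h1, h2, h3, h4]
  have hupd := hsplit (Function.update t k₀ ((1 - lam) * t k₀)) x y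
    fun k hk => ⟨Function.update_of_ne hk _ _, rfl, rfl, rfl, rfl⟩
  have hself := hsplit t x y fun _ _ => ⟨rfl, rfl, rfl, rfl, rfl⟩
  have hslice : ∀ b, swapMix t (Function.update x i b) (Function.update y i b) =
      swapMixEntry (t k₀) (Function.update x i b (.inl k₀)) (Function.update x i b (.inr k₀))
        (Function.update y i b (.inl k₀)) (Function.update y i b (.inr k₀)) * rest := fun b =>
    hsplit t _ _ fun k hk => by simp [Function.update_of_ne, (hsite k hk).1, (hsite k hk).2]
  simp only [depolAt, Matrix.add_apply, Matrix.smul_apply, of_apply, smul_eq_mul, hself, hupd, hslice,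
    Function.update_self]
  obtain k | k := i
  · simp only [k₀, Sum.elim_inl, id, Function.update_self, ne_eq, reduceCtorEq, not_false_eq_true,
      Function.update_of_ne, ← sum_mul, ← ite_zero_mul]
    linear_combination rest * swapMixEntry_depol_left lam (t k) _ _ _ _
  · simp only [k₀, Sum.elim_inr, id, Function.update_self, ne_eq, reduceCtorEq, not_false_eq_true,
      Function.update_of_ne, ← sum_mul, ← ite_zero_mul]
    linear_combination rest * swapMixEntry_depol_right lam (t k) _ _ _ _

lemma foldl_depolAt_swapMix (lam : ℝ) (l : List (ι ⊕ ι)) (t : ι → ℝ) :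
    l.foldl (fun M i => depolAt lam i M) (swapMix t) =
      swapMix fun k => (1 - lam) ^ l.countP (fun i => i.elim id id = k) * t k := by
  induction l generalizing t with
  | nil => simp
  | cons i l ih =>
    rw [List.foldl_cons, depolAt_swapMix, ih]
    congr 1
    funext k
    by_cases hk : i.elim id id = k
    · subst hk
      simp only [Function.update_self, decide_true, List.countP_cons_of_pos, pow_succ]
      ring
    · simp [hk, Function.update_of_ne (Ne.symm hk)]

lemma countP_toList_univ_pair (k : ι) :
    (univ : Finset (ι ⊕ ι)).toList.countP (fun i => i.elim id id = k) = 2 := by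
  rw [← Multiset.coe_countP, Finset.coe_toList, Multiset.countP_eq_card_filter]
  have hpair : (univ : Finset (ι ⊕ ι)).filter (fun i => i.elim id id = k) = {.inl k, .inr k} := by
    ext (j | j) <;> simp [eq_comm]
  exact (congrArg card hpair).trans (card_pair Sum.inl_ne_inr)

lemma depolAll_swapMix (lam : ℝ) (t : ι → ℝ) :
    depolAll lam (swapMix t) = swapMix fun k => (1 - lam) ^ 2 * t k := by
  simp only [depolAll, foldl_depolAt_swapMix, countP_toList_univ_pair]

noncomputable def partialSwap (T : Finset ι) : Matrix ((ι ⊕ ι) → Fin 2) ((ι ⊕ ι) → Fin 2) ℂ :=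
  of fun x y => if x = y ∘ partialSwapSites T then 1 else 0

lemma swapN_eq_partialSwap_univ (n : ℕ) : swapN n = partialSwap univ := by
  have : partialSwapSites (univ : Finset (Fin n)) = Sum.swap := by
    funext i; simp [partialSwapSites]
  rw [swapN, partialSwap, this]

lemma partialSwap_apply (T : Finset ι) (x y : (ι ⊕ ι) → Fin 2) :
    partialSwap T x y =
      (∏ k ∈ T, if x (.inl k) = y (.inr k) ∧ x (.inr k) = y (.inl k) then 1 else 0) *
        ∏ k ∈ univ \ T, if x (.inl k) = y (.inl k) ∧ x (.inr k) = y (.inr k) then 1 else 0 := by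
  rw [prod_boole, prod_boole, boole_mul, ← ite_and, partialSwap, of_apply]
  congr 1
  simp only [funext_iff, Sum.forall, Function.comp_apply, partialSwapSites, Sum.elim_inl,
    Sum.elim_inr, id, mem_sdiff, mem_univ, true_and, Sum.swap_inl, Sum.swap_inr, eq_iff_iff]
  constructor
  · rintro ⟨hl, hr⟩
    exact ⟨fun k hk => by simpa [hk] using And.intro (hl k) (hr k),
      fun k hk => by simpa [hk] using And.intro (hl k) (hr k)⟩
  · rintro ⟨hT, hc⟩
    refine ⟨fun k => ?_, fun k => ?_⟩ <;> by_cases hk : k ∈ T <;> simp [hk, hT, hc]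

lemma swapMix_eq_sum_partialSwap (t : ι → ℝ) :
    swapMix t = ∑ T ∈ univ.powerset,
      (((∏ k ∈ T, t k) * ∏ k ∈ univ \ T, (1 - t k) / 2 : ℝ) : ℂ) • partialSwap T := by
  ext x y
  simp only [swapMix, swapMixEntry, of_apply, prod_add, Matrix.sum_apply, Matrix.smul_apply,
    partialSwap_apply, smul_eq_mul, prod_mul_distrib]
  refine sum_congr rfl fun T _ => ?_
  push_cast
  ring

lemma swapN_eq_swapMix_one (n : ℕ) : swapN n = swapMix fun _ => 1 := by
  ext x y
  simp [swapN_eq_partialSwap_univ, partialSwap_apply, swapMix, swapMixEntry]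

lemma trace_mul_partialSwap (A : Matrix ((ι ⊕ ι) → Fin 2) ((ι ⊕ ι) → Fin 2) ℂ) (T : Finset ι) :
    (A * partialSwap T).trace = ∑ x, A x (x ∘ partialSwapSites T) := by
  simp [trace, mul_apply, partialSwap]

end

lemma norm_sum_mul_star_comp_le {α 𝕜 : Type*} [Fintype α] [RCLike 𝕜] (f : α → 𝕜) {g : α → α}
    (hg : g.Bijective) : ‖∑ x, f x * star (f (g x))‖ ≤ ∑ x, ‖f x‖ ^ 2 :=
  calc ‖∑ x, f x * star (f (g x))‖
      ≤ ∑ x, ‖f x‖ * ‖f (g x)‖ := by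
        simpa only [norm_mul, norm_star] using norm_sum_le univ fun x => f x * star (f (g x))
    _ ≤ ∑ x, (‖f x‖ ^ 2 + ‖f (g x)‖ ^ 2) / 2 :=
        sum_le_sum fun x _ => by nlinarith [two_mul_le_add_sq ‖f x‖ ‖f (g x)‖]
    _ = ∑ x, ‖f x‖ ^ 2 := by
        rw [← sum_div, sum_add_distrib,
          Fintype.sum_bijective g hg (fun x => ‖f (g x)‖ ^ 2) (fun x => ‖f x‖ ^ 2) fun _ => rfl]
        ring

section

variable {n : ℕ}

lemma pureTwoCopies_apply (φ : (Fin n → Fin 2) → ℂ) (x y : (Fin n ⊕ Fin n) → Fin 2) :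
    pureTwoCopies φ x y =
      φ (x ∘ .inl) * φ (x ∘ .inr) * star (φ (y ∘ .inl) * φ (y ∘ .inr)) := by
  rw [pureTwoCopies, of_apply, star_mul']
  ring

lemma sum_norm_sq_twoCopies (φ : (Fin n → Fin 2) → ℂ) :
    ∑ x : (Fin n ⊕ Fin n) → Fin 2, ‖φ (x ∘ .inl) * φ (x ∘ .inr)‖ ^ 2 = (∑ u, ‖φ u‖ ^ 2) ^ 2 := by
  rw [sq (∑ u, _), sum_mul_sum, ← Fintype.sum_prod_type']
  exact Fintype.sum_equiv (Equiv.sumArrowEquivProdArrow _ _ _) _ _ fun x => by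
    rw [norm_mul, mul_pow]
    rfl

lemma re_trace_pureTwoCopies_mul_partialSwap_le (φ : (Fin n → Fin 2) → ℂ) (T : Finset (Fin n)) :
    (pureTwoCopies φ * partialSwap T).trace.re ≤ (∑ u, ‖φ u‖ ^ 2) ^ 2 := by
  have hbij : Function.Bijective fun x : (Fin n ⊕ Fin n) → Fin 2 => x ∘ partialSwapSites T :=
    Function.Involutive.bijective fun x => by
      simp only [Function.comp_assoc, (partialSwapSites_involutive T).comp_self, Function.comp_id]
  rw [trace_mul_partialSwap, ← sum_norm_sq_twoCopies]
  refine (Complex.re_le_norm _).trans ?_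
  simp only [pureTwoCopies_apply]
  have hle := norm_sum_mul_star_comp_le (fun x => φ (x ∘ .inl) * φ (x ∘ .inr)) hbij
  exact hle

lemma re_trace_pureTwoCopies_mul_swapMix_le (φ : (Fin n → Fin 2) → ℂ) (t : Fin n → ℝ)
    (ht₀ : ∀ k, 0 ≤ t k) (ht₁ : ∀ k, t k ≤ 1) :
    (pureTwoCopies φ * swapMix t).trace.re ≤ (∑ u, ‖φ u‖ ^ 2) ^ 2 * ∏ k, (1 + t k) / 2 := by
  set c : Finset (Fin n) → ℝ := fun T => (∏ k ∈ T, t k) * ∏ k ∈ univ \ T, (1 - t k) / 2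
  have hc : ∀ T, 0 ≤ c T := fun T =>
    mul_nonneg (prod_nonneg fun k _ => ht₀ k) (prod_nonneg fun k _ => by linarith [ht₁ k])
  calc (pureTwoCopies φ * swapMix t).trace.re
      = ∑ T ∈ univ.powerset, c T * (pureTwoCopies φ * partialSwap T).trace.re := by
        simp only [swapMix_eq_sum_partialSwap, Matrix.mul_sum, Matrix.mul_smul, trace_sum,
          trace_smul, Complex.re_sum, smul_eq_mul, Complex.re_ofReal_mul, c]
    _ ≤ ∑ T ∈ univ.powerset, c T * (∑ u, ‖φ u‖ ^ 2) ^ 2 :=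
        sum_le_sum fun T _ =>
          mul_le_mul_of_nonneg_left (re_trace_pureTwoCopies_mul_partialSwap_le φ T) (hc T)
    _ = (∑ u, ‖φ u‖ ^ 2) ^ 2 * ∏ k, (1 + t k) / 2 := by
        rw [← sum_mul, ← prod_add, mul_comm]
        exact congrArg _ (prod_congr rfl fun k _ => by ring)

end

/-- **Depolarized swap test bound.** For any `n`-qubit pure state `|φ⟩` and
`λ ∈ [0,1]`,
`tr(|φ⟩⟨φ|^{⊗2} · (D_λ^{⊗n} ⊗ D_λ^{⊗n})(SWAP_n)) ≤ (1 − λ + λ²/2)^n`. -/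
theorem trace_pure_depol_swap_le (n : ℕ) (lam : ℝ) (h0 : 0 ≤ lam) (h1 : lam ≤ 1)
    (φ : (Fin n → Fin 2) → ℂ) (hφ : ∑ x, φ x * star (φ x) = 1) :
    ((pureTwoCopies φ * depolAll lam (swapN n)).trace).re ≤ (1 - lam + lam ^ 2 / 2) ^ n := by
  have hnorm : ∑ x, ‖φ x‖ ^ 2 = 1 := by
    have : ∑ x, ((‖φ x‖ ^ 2 : ℝ) : ℂ) = 1 := by simpa [RCLike.mul_conj] using hφ
    exact_mod_cast this
  rw [swapN_eq_swapMix_one, depolAll_swapMix]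
  calc _ ≤ (∑ x, ‖φ x‖ ^ 2) ^ 2 * ∏ _k : Fin n, (1 + (1 - lam) ^ 2 * 1) / 2 :=
        re_trace_pureTwoCopies_mul_swapMix_le φ _ (fun _ => by positivity) (fun _ => by nlinarith)
    _ = (1 - lam + lam ^ 2 / 2) ^ n := by
        rw [hnorm, prod_const, card_univ, Fintype.card_fin]
        ring
end

section
/- For any n-qubit pure state |φ⟩ and λ ∈ [0,1], tr(|φ⟩⟨φ|^{⊗2} · (D_λ^{⊗n}⊗D_λ^{⊗n})((2·SWAP₁ − I₄)^{⊗n})) ≤ ((3^n + 1)/2)·(1−λ)^{2n}. -/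
/-!
Since the partial trace of `2·SWAP − I` over either of its qubits vanishes, every single-qubit
depolarizing channel just multiplies `(2·SWAP − I)^{⊗n}` by `1 − λ`. Expanding the tensor power,
`tr(ρ^{⊗2} (2·SWAP − I)^{⊗n}) = ∑_S 2^|S| (−1)^(n−|S|) tr(ρ^{⊗2} SWAP_S)`, and
`tr(ρ^{⊗2} SWAP_S) = tr ρ_S² = ‖A Aᴴ‖²` (Frobenius norm) for the coefficient matrix `A` of `φ`
across the cut `S | Sᶜ`, so it lies in `[0, ‖A‖⁴] = [0, 1]`. Dropping the terms with `n − |S|` odd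
leaves `∑_S 2^|S| (1 + (−1)^(n−|S|))/2 = (3^n + 1)/2`.
-/

open Matrix

/-- The operator `(2·SWAP₁ − I₄)^{⊗n}` on two copies of the `n`-qubit register,
where the `i`-th factor acts on the pair of qubits `(inl i, inr i)`. -/
noncomputable def twoSwapMinusIdPow (n : ℕ) :
    Matrix ((Fin n ⊕ Fin n) → Fin 2) ((Fin n ⊕ Fin n) → Fin 2) ℂ :=
  Matrix.of fun x y => ∏ i : Fin n,
    ((2 : ℂ) * (if x (Sum.inl i) = y (Sum.inr i) ∧ x (Sum.inr i) = y (Sum.inl i) then 1 else 0)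
      - (if x (Sum.inl i) = y (Sum.inl i) ∧ x (Sum.inr i) = y (Sum.inr i) then 1 else 0))

lemma Fintype.sum_prod_eq_zero_of_sum_eq_zero {ι β R : Type*} [Fintype ι] [DecidableEq ι]
    [Fintype β] [CommSemiring R] {F : β → ι → R} (i₀ : ι) (b₀ : β)
    (hF : ∀ b, ∀ i ≠ i₀, F b i = F b₀ i) (h : ∑ b, F b i₀ = 0) :
    ∑ b, ∏ i, F b i = 0 := by
  calc ∑ b, ∏ i, F b i = ∑ b, F b i₀ * ∏ i ∈ Finset.univ.erase i₀, F b₀ i := by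
        refine Finset.sum_congr rfl fun b _ => ?_
        rw [← Finset.mul_prod_erase _ _ (Finset.mem_univ i₀)]
        exact congrArg _ (Finset.prod_congr rfl fun i hi => hF b i (Finset.ne_of_mem_erase hi))
    _ = 0 := by rw [← Finset.sum_mul, h, zero_mul]

lemma sum_twoSwapMinusIdPow_update {n : ℕ} (j : Fin n ⊕ Fin n) (x y : (Fin n ⊕ Fin n) → Fin 2) :
    ∑ b : Fin 2, twoSwapMinusIdPow n (Function.update x j b) (Function.update y j b) = 0 := by
  obtain i₀ | i₀ := j <;>
  · refine Fintype.sum_prod_eq_zero_of_sum_eq_zero i₀ 0 (fun b i hi => ?_) ?_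
    · simp [Function.update_of_ne, hi]
    · simp only [Function.update_self, Function.update_of_ne, ne_eq, reduceCtorEq,
        not_false_eq_true, Fin.sum_univ_two]
      generalize x _ = p, y _ = q
      fin_cases p <;> fin_cases q <;> norm_num

lemma depolAt_eq_smul_of_sum_update_eq_zero {ι : Type} [DecidableEq ι] [Fintype ι] (lam : ℝ)
    (i : ι) {M : Matrix (ι → Fin 2) (ι → Fin 2) ℂ}
    (hM : ∀ x y, ∑ b, M (Function.update x i b) (Function.update y i b) = 0) :
    depolAt lam i M = ((1 - lam : ℝ) : ℂ) • M := by
  rw [depolAt, add_eq_left, smul_eq_zero]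
  right
  ext x y
  simp [hM]

lemma depolAt_smul {ι : Type} [DecidableEq ι] [Fintype ι] (lam : ℝ) (i : ι) (c : ℂ)
    (M : Matrix (ι → Fin 2) (ι → Fin 2) ℂ) :
    depolAt lam i (c • M) = c • depolAt lam i M := by
  ext x y
  simp only [depolAt, Matrix.add_apply, Matrix.smul_apply, Matrix.of_apply, smul_eq_mul,
    ← Finset.mul_sum]
  split_ifs <;> ring

lemma depolAll_eq_pow_smul {ι : Type} [DecidableEq ι] [Fintype ι] (lam : ℝ)
    {M : Matrix (ι → Fin 2) (ι → Fin 2) ℂ}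
    (hM : ∀ i x y, ∑ b, M (Function.update x i b) (Function.update y i b) = 0) :
    depolAll lam M = (((1 - lam) ^ Fintype.card ι : ℝ) : ℂ) • M := by
  have foldl_smul : ∀ (L : List ι) (c : ℂ), L.foldl (fun N i => depolAt lam i N) (c • M)
      = (((1 - lam) ^ L.length : ℝ) * c) • M := by
    intro L
    induction L with
    | nil => simp
    | cons i L ih =>
      intro c
      rw [List.foldl_cons, depolAt_smul, depolAt_eq_smul_of_sum_update_eq_zero lam i (hM i),
        smul_smul, ih, List.length_cons, pow_succ]
      congr 1
      push_cast
      ring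
  simpa [depolAll] using foldl_smul Finset.univ.toList 1

lemma depolAll_twoSwapMinusIdPow (n : ℕ) (lam : ℝ) :
    depolAll lam (twoSwapMinusIdPow n) = (((1 - lam) ^ (2 * n) : ℝ) : ℂ) • twoSwapMinusIdPow n := by
  rw [depolAll_eq_pow_smul lam sum_twoSwapMinusIdPow_update, Fintype.card_sum, Fintype.card_fin,
    two_mul]

section Frobenius

attribute [local instance] Matrix.frobeniusNormedAddCommGroup

variable {m k : Type*} [Fintype m] [Fintype k]

lemma Matrix.trace_mul_conjTranspose_self_eq_frobenius_norm_sq (B : Matrix m k ℂ) :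
    (B * Bᴴ).trace = ((‖B‖ ^ 2 : ℝ) : ℂ) := by
  have hnorm : ‖B‖ ^ 2 = ∑ i, ∑ j, ‖B i j‖ ^ 2 := by
    rw [Matrix.frobenius_norm_def, ← Real.sqrt_eq_rpow, Real.sq_sqrt (by positivity)]
    simp_rw [Real.rpow_two]
  simp [hnorm, Matrix.trace, Matrix.mul_apply, Complex.mul_conj, Complex.normSq_eq_norm_sq]

lemma Matrix.re_trace_sq_mul_conjTranspose_self_mem_Icc (A : Matrix m k ℂ) :
    ((A * Aᴴ) * (A * Aᴴ)).trace.re ∈ Set.Icc 0 ((A * Aᴴ).trace.re ^ 2) := by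
  have hsq := (A * Aᴴ).trace_mul_conjTranspose_self_eq_frobenius_norm_sq
  rw [Matrix.conjTranspose_mul, Matrix.conjTranspose_conjTranspose] at hsq
  rw [hsq, A.trace_mul_conjTranspose_self_eq_frobenius_norm_sq, Complex.ofReal_re,
    Complex.ofReal_re]
  refine ⟨by positivity, ?_⟩
  calc ‖A * Aᴴ‖ ^ 2 ≤ (‖A‖ * ‖Aᴴ‖) ^ 2 := by gcongr; exact Matrix.frobenius_norm_mul A Aᴴ
    _ = (‖A‖ ^ 2) ^ 2 := by rw [Matrix.frobenius_norm_conjTranspose]; ring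

end Frobenius

lemma Finset.piecewise_piEquivPiSubtypeProd_symm {ι κ : Type*} [DecidableEq ι] (S : Finset ι)
    (a c : {i // i ∈ S} → κ) (b d : {i // i ∉ S} → κ) :
    S.piecewise ((Equiv.piEquivPiSubtypeProd (· ∈ S) fun _ => κ).symm (c, d))
      ((Equiv.piEquivPiSubtypeProd (· ∈ S) fun _ => κ).symm (a, b))
      = (Equiv.piEquivPiSubtypeProd (· ∈ S) fun _ => κ).symm (c, b) := by
  ext i
  by_cases hi : i ∈ S <;> simp [hi]

section Bipartition

variable {ι κ : Type*} [Fintype ι] [DecidableEq ι] [Fintype κ]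

/-- `tr(ρ^{⊗2} SWAP_S)` for the (unnormalized) pure state `ρ = |φ⟩⟨φ|`, where `SWAP_S` exchanges
the two copies of the sites in `S`. -/
noncomputable def swapOverlap (φ : (ι → κ) → ℂ) (S : Finset ι) : ℂ :=
  ∑ u, ∑ w, φ u * φ w * star (φ (S.piecewise w u)) * star (φ (S.piecewise u w))

/-- `A * Aᴴ` is the reduced density matrix of `|φ⟩⟨φ|` on the sites in `S`. -/
noncomputable def coeffMatrix (φ : (ι → κ) → ℂ) (S : Finset ι) :
    Matrix ({i // i ∈ S} → κ) ({i // i ∉ S} → κ) ℂ :=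
  Matrix.of fun a b => φ ((Equiv.piEquivPiSubtypeProd (· ∈ S) fun _ => κ).symm (a, b))

lemma trace_coeffMatrix_mul_conjTranspose (φ : (ι → κ) → ℂ) (S : Finset ι) :
    (coeffMatrix φ S * (coeffMatrix φ S)ᴴ).trace = ∑ x, φ x * star (φ x) := by
  rw [← (Equiv.piEquivPiSubtypeProd (· ∈ S) fun _ => κ).symm.sum_comp, Fintype.sum_prod_type]
  simp [Matrix.trace, Matrix.mul_apply, coeffMatrix]

lemma swapOverlap_eq_trace (φ : (ι → κ) → ℂ) (S : Finset ι) :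
    swapOverlap φ S = ((coeffMatrix φ S * (coeffMatrix φ S)ᴴ) *
      (coeffMatrix φ S * (coeffMatrix φ S)ᴴ)).trace := by
  set e := (Equiv.piEquivPiSubtypeProd (· ∈ S) fun _ => κ).symm
  rw [swapOverlap, ← e.sum_comp, Fintype.sum_prod_type]
  simp_rw [← e.sum_comp, Fintype.sum_prod_type, e, Finset.piecewise_piEquivPiSubtypeProd_symm]
  simp only [Matrix.trace, Matrix.diag_apply, Matrix.mul_apply, Matrix.conjTranspose_apply,
    coeffMatrix, Matrix.of_apply, Finset.sum_mul_sum]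
  refine Finset.sum_congr rfl fun a _ => ?_
  rw [Finset.sum_comm]
  refine Finset.sum_congr rfl fun c _ => ?_
  refine Finset.sum_congr rfl fun b _ => Finset.sum_congr rfl fun d _ => ?_
  ring

lemma re_swapOverlap_mem_Icc {φ : (ι → κ) → ℂ} (hφ : ∑ x, φ x * star (φ x) = 1)
    (S : Finset ι) : (swapOverlap φ S).re ∈ Set.Icc 0 1 := by
  have h := (coeffMatrix φ S).re_trace_sq_mul_conjTranspose_self_mem_Icc
  rwa [trace_coeffMatrix_mul_conjTranspose, hφ, Complex.one_re, one_pow, ← swapOverlap_eq_trace]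
    at h

end Bipartition

def swapOn {ι κ : Type*} [DecidableEq ι] (S : Finset ι) (x : ι ⊕ ι → κ) : ι ⊕ ι → κ :=
  Sum.elim (S.piecewise (x ∘ Sum.inr) (x ∘ Sum.inl)) (S.piecewise (x ∘ Sum.inl) (x ∘ Sum.inr))

lemma eq_swapOn_iff {ι κ : Type*} [Fintype ι] [DecidableEq ι] (S : Finset ι)
    (x y : ι ⊕ ι → κ) :
    y = swapOn S x ↔
      (∀ i ∈ S, y (Sum.inl i) = x (Sum.inr i) ∧ y (Sum.inr i) = x (Sum.inl i)) ∧
        ∀ i ∈ Sᶜ, y (Sum.inl i) = x (Sum.inl i) ∧ y (Sum.inr i) = x (Sum.inr i) := by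
  simp only [funext_iff, Sum.forall, swapOn, Sum.elim_inl, Sum.elim_inr, Finset.piecewise,
    Function.comp_apply, Finset.mem_compl]
  constructor
  · rintro ⟨hl, hr⟩
    exact ⟨fun i hi => by simp [hl i, hr i, hi], fun i hi => by simp [hl i, hr i, hi]⟩
  · rintro ⟨hS, hSc⟩
    constructor <;> intro i <;> by_cases hi : i ∈ S <;> simp [hi, hS i, hSc i]

lemma twoSwapMinusIdPow_apply_eq_sum (n : ℕ) (x y : (Fin n ⊕ Fin n) → Fin 2) :
    twoSwapMinusIdPow n y x
      = ∑ S : Finset (Fin n), 2 ^ S.card * (-1) ^ (n - S.card) *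
          if y = swapOn S x then 1 else 0 := by
  simp only [twoSwapMinusIdPow, Matrix.of_apply, sub_eq_add_neg, Fintype.prod_add]
  refine Finset.sum_congr rfl fun S _ => ?_
  rw [Finset.prod_mul_distrib, Finset.prod_const, Finset.prod_neg, Finset.prod_boole,
    Finset.prod_boole, Finset.card_compl, Fintype.card_fin, mul_mul_mul_comm, ite_zero_mul_ite_zero,
    mul_one]
  congr 1
  simp only [eq_swapOn_iff]
  congr

lemma sum_pureTwoCopies_swapOn {n : ℕ} (φ : (Fin n → Fin 2) → ℂ) (S : Finset (Fin n)) :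
    ∑ x, pureTwoCopies φ x (swapOn S x) = swapOverlap φ S := by
  rw [← (Equiv.sumArrowEquivProdArrow (Fin n) (Fin n) (Fin 2)).symm.sum_comp,
    Fintype.sum_prod_type, swapOverlap]
  refine Finset.sum_congr rfl fun u _ => Finset.sum_congr rfl fun w _ => ?_
  change pureTwoCopies φ (Sum.elim u w) (swapOn S (Sum.elim u w)) = _
  simp only [pureTwoCopies, swapOn, Matrix.of_apply, Sum.elim_comp_inl, Sum.elim_comp_inr]
  ring

lemma trace_pureTwoCopies_mul_twoSwapMinusIdPow {n : ℕ} (φ : (Fin n → Fin 2) → ℂ) :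
    (pureTwoCopies φ * twoSwapMinusIdPow n).trace
      = ∑ S : Finset (Fin n), 2 ^ S.card * (-1) ^ (n - S.card) * swapOverlap φ S := by
  simp only [← sum_pureTwoCopies_swapOn, Finset.mul_sum]
  rw [Finset.sum_comm]
  refine Finset.sum_congr rfl fun x _ => ?_
  simp only [Matrix.diag_apply, Matrix.mul_apply, twoSwapMinusIdPow_apply_eq_sum, Finset.mul_sum]
  rw [Finset.sum_comm]
  refine Finset.sum_congr rfl fun S _ => ?_
  simp only [mul_ite, mul_one, mul_zero, Finset.sum_ite_eq', Finset.mem_univ, if_true]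
  ring

lemma neg_one_pow_mul_le_of_mem_Icc {t : ℝ} (ht : t ∈ Set.Icc 0 1) (k : ℕ) :
    (-1) ^ k * t ≤ (1 + (-1) ^ k) / 2 := by
  obtain ⟨h0, h1⟩ := ht
  rcases neg_one_pow_eq_or ℝ k with h | h <;> rw [h] <;> linarith

lemma re_trace_pureTwoCopies_mul_twoSwapMinusIdPow_le {n : ℕ} {φ : (Fin n → Fin 2) → ℂ}
    (hφ : ∑ x, φ x * star (φ x) = 1) :
    (pureTwoCopies φ * twoSwapMinusIdPow n).trace.re ≤ (3 ^ n + 1) / 2 := by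
  have hre : ∀ S : Finset (Fin n),
      ((2 : ℂ) ^ S.card * (-1) ^ (n - S.card) * swapOverlap φ S).re
        = 2 ^ S.card * ((-1) ^ (n - S.card) * (swapOverlap φ S).re) := fun S => by
    rw [← mul_assoc]
    exact_mod_cast Complex.re_ofReal_mul ((2 : ℝ) ^ S.card * (-1) ^ (n - S.card)) _
  calc (pureTwoCopies φ * twoSwapMinusIdPow n).trace.re
      = ∑ S : Finset (Fin n), 2 ^ S.card * ((-1) ^ (n - S.card) * (swapOverlap φ S).re) := by
        rw [trace_pureTwoCopies_mul_twoSwapMinusIdPow, Complex.re_sum]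
        simp only [hre]
    _ ≤ ∑ S : Finset (Fin n), 2 ^ S.card * ((1 + (-1) ^ (n - S.card)) / 2) := by
        gcongr with S
        exact neg_one_pow_mul_le_of_mem_Icc (re_swapOverlap_mem_Icc hφ S) _
    _ = ((2 + 1) ^ n + (2 + (-1)) ^ n) / 2 := by
        simp only [← Fin.sum_pow_mul_eq_add_pow, one_pow, ← Finset.sum_add_distrib,
          Finset.sum_div]
        refine Finset.sum_congr rfl fun S _ => ?_
        ring
    _ = (3 ^ n + 1) / 2 := by norm_num

theorem trace_pure_depol_twoSwapMinusId_le_general (n : ℕ) (lam : ℝ)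
    (φ : (Fin n → Fin 2) → ℂ) (hφ : ∑ x, φ x * star (φ x) = 1) :
    ((pureTwoCopies φ * depolAll lam (twoSwapMinusIdPow n)).trace).re
      ≤ ((3 ^ n + 1) / 2) * (1 - lam) ^ (2 * n) := by
  rw [depolAll_twoSwapMinusIdPow, Matrix.mul_smul, Matrix.trace_smul, smul_eq_mul,
    Complex.re_ofReal_mul, mul_comm]
  have hpow : 0 ≤ (1 - lam) ^ (2 * n) := by rw [pow_mul']; positivity
  exact mul_le_mul_of_nonneg_right (re_trace_pureTwoCopies_mul_twoSwapMinusIdPow_le hφ) hpow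

/-- **Depolarized `(2·SWAP₁ − I₄)^{⊗n}` bound.** For any `n`-qubit pure state
`|φ⟩` and `λ ∈ [0,1]`,
`tr(|φ⟩⟨φ|^{⊗2} · (D_λ^{⊗n}⊗D_λ^{⊗n})((2·SWAP₁ − I₄)^{⊗n})) ≤ ((3^n+1)/2)·(1−λ)^{2n}`. -/
theorem trace_pure_depol_twoSwapMinusId_le (n : ℕ) (lam : ℝ) (h0 : 0 ≤ lam) (h1 : lam ≤ 1)
    (φ : (Fin n → Fin 2) → ℂ) (hφ : ∑ x, φ x * star (φ x) = 1) :
    ((pureTwoCopies φ * depolAll lam (twoSwapMinusIdPow n)).trace).re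
      ≤ ((3 ^ n + 1) / 2) * (1 - lam) ^ (2 * n) :=
  trace_pure_depol_twoSwapMinusId_le_general n lam φ hφ
end

section
/- For positive semidefinite operators ρ_x on x copies and ρ_y on y copies of a fixed finite-dimensional Hilbert space, tr((ρ_x ⊗ ρ_y) · S_{x+y}) ≥ tr(ρ_x S_x) · tr(ρ_y S_y), where S_k denotes the sum of all permutation operators on k copies. -/
/-!
Write `ρ = Bᴴ B` and replace `ρ` by `P ρ P`, where `P = S / n!` is the symmetrizer. Since `S`
absorbs `P` on both sides (and `S_{x+y}` absorbs `P_x ⊗ P_y`), none of the three traces changes,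
while the rows of `C = B P` become permutation-invariant functions. Expanding
`tr((ρx ⊗ ρy) S_{x+y}) = Σ_π tr((ρx ⊗ ρy) W_π)`, the permutations `π ∈ Sym(x) × Sym(y)` contribute
exactly `tr(ρx S_x) tr(ρy S_y)`, and every other term is nonnegative: for invariant `u` and `v`,
sort the positions into four blocks according to whether they lie in `X` or `Y` and whether `π`
maps them into `X` or `Y`; invariance then gives
`⟨u ⊗ v, W_π (u ⊗ v)⟩ = Σ_{p,t} |Σ_q u(p,q) v̄(q,t)|²`.
-/

open Matrix
open scoped ComplexOrder

/-- The sum `S_k = Σ_{π ∈ Sym(κ)} W_π` of all permutation operators on copies of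
`C^d` indexed by `κ`. -/
noncomputable def permSum (κ : Type) [DecidableEq κ] [Fintype κ] (d : ℕ) :
    Matrix (κ → Fin d) (κ → Fin d) ℂ :=
  ∑ π : Equiv.Perm κ, Matrix.of fun z w => if z = w ∘ π then 1 else 0

/-- The tensor product `ρx ⊗ ρy` of operators on `x` copies and `y` copies,
viewed as an operator on the `x + y` copies indexed by `Fin x ⊕ Fin y`. -/
noncomputable def tensorCopies {d x y : ℕ}
    (ρx : Matrix (Fin x → Fin d) (Fin x → Fin d) ℂ)
    (ρy : Matrix (Fin y → Fin d) (Fin y → Fin d) ℂ) :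
    Matrix ((Fin x ⊕ Fin y) → Fin d) ((Fin x ⊕ Fin y) → Fin d) ℂ :=
  Matrix.of fun z w => ρx (z ∘ Sum.inl) (w ∘ Sum.inl) * ρy (z ∘ Sum.inr) (w ∘ Sum.inr)

open Function
open scoped Kronecker

section PermInvariant

variable {X Y V R : Type*}

def PermInvariant (α : (X → V) → R) : Prop :=
  ∀ (σ : Equiv.Perm X) (a : X → V), α (a ∘ σ) = α a

theorem PermInvariant.comp_eq_of_range_eq {W : Type*} {α : (X → V) → R} (hα : PermInvariant α)
    {ι ι' : X → W} (hι : Injective ι) (hι' : Injective ι') (h : Set.range ι = Set.range ι')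
    (z : W → V) : α (z ∘ ι) = α (z ∘ ι') := by
  let σ : Equiv.Perm X :=
    (Equiv.ofInjective ι hι).trans ((Equiv.setCongr h).trans (Equiv.ofInjective ι' hι').symm)
  have hσ : ι' ∘ σ = ι := funext fun x => by simp [σ, Equiv.apply_ofInjective_symm]
  rw [← hσ, ← comp_assoc, hα]

theorem Fintype.sum_arrow_sum [Fintype X] [Fintype Y] [DecidableEq X] [DecidableEq Y] [Fintype V]
    [AddCommMonoid R] (G : (X ⊕ Y → V) → R) :
    ∑ w, G w = ∑ a, ∑ b, G (Sum.elim a b) := by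
  rw [← (Equiv.sumArrowEquivProdArrow X Y V).symm.sum_comp, Fintype.sum_prod_type]
  rfl

end PermInvariant

theorem sum_star_mul_mul_star_mul_nonneg {I J K : Type*} [Fintype I] [Fintype J] [Fintype K]
    (a : I → J → ℂ) (b : J → K → ℂ) :
    0 ≤ ∑ i, ∑ j, ∑ j', ∑ k, star (a i j' * b j k) * (a i j * b j' k) := by
  have h : ∀ i : I, ∑ j, ∑ j', ∑ k, star (a i j' * b j k) * (a i j * b j' k) =
      ∑ k, (∑ j, a i j * star (b j k)) * star (∑ j, a i j * star (b j k)) := fun i => by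
    simp only [star_sum, Finset.sum_mul_sum, star_mul', star_star]
    conv_lhs => enter [2, j]; rw [Finset.sum_comm]
    conv_lhs => rw [Finset.sum_comm]
    exact Finset.sum_congr rfl fun _ _ => Finset.sum_congr rfl fun _ _ =>
      Finset.sum_congr rfl fun _ _ => by ring
  simp only [h]
  exact Finset.sum_nonneg fun i _ => Finset.sum_nonneg fun k _ => mul_star_self_nonneg _

section PermBlocks

variable {X Y : Type*} (π : Equiv.Perm (X ⊕ Y))

noncomputable def leftSplit :
    X ≃ {i : X // π (.inl i) ∈ Set.range Sum.inl} ⊕ {i : X // π (.inl i) ∉ Set.range Sum.inl} := by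
  classical
  exact (Equiv.sumCompl _).symm

noncomputable def rightSplit :
    Y ≃ {j : Y // π (.inr j) ∈ Set.range Sum.inl} ⊕ {j : Y // π (.inr j) ∉ Set.range Sum.inl} := by
  classical
  exact (Equiv.sumCompl _).symm

/-- The four blocks index, through `π`, the positions in `π(X) ∩ X`, `π(X) ∩ Y`, `π(Y) ∩ X` and
`π(Y) ∩ Y`. -/
noncomputable def permBlocksEquiv :
    ({i : X // π (.inl i) ∈ Set.range Sum.inl} ⊕ {i : X // π (.inl i) ∉ Set.range Sum.inl}) ⊕
      ({j : Y // π (.inr j) ∈ Set.range Sum.inl} ⊕ {j : Y // π (.inr j) ∉ Set.range Sum.inl}) ≃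
    X ⊕ Y :=
  (Equiv.sumCongr (leftSplit π) (rightSplit π)).symm.trans π

theorem permBlocksEquiv_symm_comp :
    (permBlocksEquiv π).symm ∘ π = Sum.map (leftSplit π) (rightSplit π) := by
  funext u
  simp [permBlocksEquiv]

theorem range_permBlocksEquiv_symm_comp_inl :
    Set.range ((permBlocksEquiv π).symm ∘ Sum.inl) =
      Set.range (Sum.elim (Sum.inl ∘ Sum.inl) (Sum.inr ∘ Sum.inl)) := by
  rw [Set.range_comp, Equiv.image_symm_eq_preimage]
  ext ((p | q) | (s | t))
  · simpa [permBlocksEquiv, leftSplit] using p.2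
  · simpa [permBlocksEquiv, leftSplit] using q.2
  · simpa [permBlocksEquiv, rightSplit] using s.2
  · simpa [permBlocksEquiv, rightSplit] using t.2

theorem range_permBlocksEquiv_symm_comp_inr :
    Set.range ((permBlocksEquiv π).symm ∘ Sum.inr) =
      Set.range (Sum.elim (Sum.inl ∘ Sum.inr) (Sum.inr ∘ Sum.inr)) := by
  rw [Set.range_comp, Equiv.image_symm_eq_preimage, ← Set.compl_range_inl, Set.preimage_compl,
    ← Equiv.image_symm_eq_preimage, ← Set.range_comp, range_permBlocksEquiv_symm_comp_inl]
  ext ((p | q) | (s | t)) <;> simp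

theorem card_leaving_eq_card_entering [Finite X] [Finite Y] :
    Nat.card {i : X // π (.inl i) ∉ Set.range Sum.inl} =
      Nat.card {j : Y // π (.inr j) ∈ Set.range Sum.inl} := by
  have hX : Nat.card {i : X // π (.inl i) ∈ Set.range Sum.inl} +
      Nat.card {i : X // π (.inl i) ∉ Set.range Sum.inl} = Nat.card X := by
    rw [← Nat.card_sum, Nat.card_congr (leftSplit π)]
  have hX' : Nat.card {i : X // π (.inl i) ∈ Set.range Sum.inl} +
      Nat.card {j : Y // π (.inr j) ∈ Set.range Sum.inl} = Nat.card X := by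
    rw [← Nat.card_sum, ← Nat.card_range_of_injective
      ((permBlocksEquiv π).symm.injective.comp Sum.inl_injective),
      range_permBlocksEquiv_symm_comp_inl, Nat.card_range_of_injective]
    exact (Sum.inl_injective.comp Sum.inl_injective).sumElim
      (Sum.inr_injective.comp Sum.inl_injective) fun _ _ => Sum.inl_ne_inr
  omega

variable {V R : Type*} (p : {i : X // π (.inl i) ∈ Set.range Sum.inl} → V)
  (q : {i : X // π (.inl i) ∉ Set.range Sum.inl} → V)
  (s : {j : Y // π (.inr j) ∈ Set.range Sum.inl} → V)
  (t : {j : Y // π (.inr j) ∉ Set.range Sum.inl} → V)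
  (g : {i : X // π (.inl i) ∉ Set.range Sum.inl} ≃ {j : Y // π (.inr j) ∈ Set.range Sum.inl})

theorem PermInvariant.apply_elim_comp_permBlocksEquiv_symm_comp_inl {α : (X → V) → R}
    (hα : PermInvariant α) :
    α ((Sum.elim (Sum.elim p q) (Sum.elim s t) ∘ (permBlocksEquiv π).symm) ∘ Sum.inl) =
      α (Sum.elim p (s ∘ g) ∘ leftSplit π) := by
  rw [comp_assoc,
    hα.comp_eq_of_range_eq ((permBlocksEquiv π).symm.injective.comp Sum.inl_injective)
    (((Sum.inl_injective.comp Sum.inl_injective).sumElim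
      (Sum.inr_injective.comp Sum.inl_injective) fun _ _ => Sum.inl_ne_inr).comp
        ((leftSplit π).trans (Equiv.sumCongr (Equiv.refl _) g)).injective)
    (by rw [EquivLike.range_comp, range_permBlocksEquiv_symm_comp_inl])]
  congr 1
  funext i
  rcases h : leftSplit π i with i' | i' <;> simp [h]

theorem PermInvariant.apply_elim_comp_permBlocksEquiv_symm_comp_inr {β : (Y → V) → R}
    (hβ : PermInvariant β) :
    β ((Sum.elim (Sum.elim p q) (Sum.elim s t) ∘ (permBlocksEquiv π).symm) ∘ Sum.inr) =
      β (Sum.elim (q ∘ g.symm) t ∘ rightSplit π) := by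
  rw [comp_assoc,
    hβ.comp_eq_of_range_eq ((permBlocksEquiv π).symm.injective.comp Sum.inr_injective)
    (((Sum.inl_injective.comp Sum.inr_injective).sumElim
      (Sum.inr_injective.comp Sum.inr_injective) fun _ _ => Sum.inl_ne_inr).comp
        ((rightSplit π).trans (Equiv.sumCongr g.symm (Equiv.refl _))).injective)
    (by rw [EquivLike.range_comp, range_permBlocksEquiv_symm_comp_inr])]
  congr 1
  funext j
  rcases h : rightSplit π j with j' | j' <;> simp [h]

end PermBlocks

theorem sum_star_mul_comp_perm_nonneg {X Y V : Type*} [Fintype X] [Fintype Y] [Fintype V]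
    [DecidableEq X] [DecidableEq Y] {α : (X → V) → ℂ} {β : (Y → V) → ℂ}
    (hα : PermInvariant α) (hβ : PermInvariant β) (π : Equiv.Perm (X ⊕ Y)) :
    0 ≤ ∑ z : X ⊕ Y → V, star (α (z ∘ Sum.inl) * β (z ∘ Sum.inr)) *
      (α (z ∘ π ∘ Sum.inl) * β (z ∘ π ∘ Sum.inr)) := by
  obtain ⟨g⟩ := Finite.card_eq.mp (card_leaving_eq_card_entering π)
  set ψ := permBlocksEquiv π
  let a p q := α (Sum.elim p q ∘ leftSplit π)
  let b s t := β (Sum.elim s t ∘ rightSplit π)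
  -- `z ∘ inl` reads the blocks `p, s`, `z ∘ inr` reads `q, t`, `z ∘ π ∘ inl` reads `p, q` and
  -- `z ∘ π ∘ inr` reads `s, t`; invariance lets `g` move `s` and `q` into each other's slot.
  have key : ∀ p q s t,
      let z := Sum.elim (Sum.elim p q) (Sum.elim s t) ∘ ψ.symm
      star (α (z ∘ Sum.inl) * β (z ∘ Sum.inr)) * (α (z ∘ π ∘ Sum.inl) * β (z ∘ π ∘ Sum.inr)) =
        star (a p (s ∘ g) * b (q ∘ g.symm) t) * (a p q * b s t) := by
    intro p q s t z
    rw [hα.apply_elim_comp_permBlocksEquiv_symm_comp_inl π p q s t g,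
      hβ.apply_elim_comp_permBlocksEquiv_symm_comp_inr π p q s t g, ← comp_assoc z,
      ← comp_assoc z, comp_assoc _ ψ.symm, permBlocksEquiv_symm_comp]
    rfl
  calc (0 : ℂ) ≤ ∑ p, ∑ q, ∑ s', ∑ t,
        star (a p s' * b (q ∘ g.symm) t) * (a p q * b (s' ∘ g.symm) t) :=
        sum_star_mul_mul_star_mul_nonneg a fun q t => b (q ∘ g.symm) t
    _ = ∑ p, ∑ q, ∑ s, ∑ t, star (a p (s ∘ g) * b (q ∘ g.symm) t) * (a p q * b s t) := by
        refine Fintype.sum_congr _ _ fun p => Fintype.sum_congr _ _ fun q => ?_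
        refine Fintype.sum_equiv (g.arrowCongr (Equiv.refl V)) _ _ fun s' => ?_
        rw [show g.arrowCongr (Equiv.refl V) s' ∘ g = s' from funext fun x => by simp]
        rfl
    _ = ∑ w : _ → V, star (α ((w ∘ ψ.symm) ∘ Sum.inl) * β ((w ∘ ψ.symm) ∘ Sum.inr)) *
          (α ((w ∘ ψ.symm) ∘ π ∘ Sum.inl) * β ((w ∘ ψ.symm) ∘ π ∘ Sum.inr)) := by
        simp only [Fintype.sum_arrow_sum]
        exact Fintype.sum_congr _ _ fun p => Fintype.sum_congr _ _ fun q =>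
          Fintype.sum_congr _ _ fun s => Fintype.sum_congr _ _ fun t => (key p q s t).symm
    _ = _ := Fintype.sum_equiv (ψ.arrowCongr (Equiv.refl V)) _ _ fun _ => rfl

section PermMat

variable {κ : Type} [Fintype κ] {d : ℕ}

noncomputable def permMat (d : ℕ) (π : Equiv.Perm κ) : Matrix (κ → Fin d) (κ → Fin d) ℂ :=
  Matrix.of fun z w => if z = w ∘ π then 1 else 0

theorem conjTranspose_permMat (π : Equiv.Perm κ) : (permMat d π)ᴴ = permMat d π⁻¹ := by
  ext z w
  simp only [permMat, Matrix.conjTranspose_apply, Matrix.of_apply, apply_ite star, star_one,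
    star_zero, Equiv.Perm.coe_inv, Equiv.eq_comp_symm, eq_comm]

variable [DecidableEq κ]

theorem permSum_eq_sum_permMat : permSum κ d = ∑ π, permMat d π := rfl

theorem mul_permMat_apply (M : Matrix (κ → Fin d) (κ → Fin d) ℂ) (π : Equiv.Perm κ)
    (z w : κ → Fin d) : (M * permMat d π) z w = M z (w ∘ π) := by
  simp [permMat, Matrix.mul_apply]

theorem trace_mul_permMat (M : Matrix (κ → Fin d) (κ → Fin d) ℂ) (π : Equiv.Perm κ) :
    (M * permMat d π).trace = ∑ z, M z (z ∘ π) := by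
  simp only [Matrix.trace, Matrix.diag, mul_permMat_apply]

theorem permMat_mul_permMat (σ τ : Equiv.Perm κ) :
    permMat d σ * permMat d τ = permMat (d := d) (τ * σ) := by
  ext z w
  rw [mul_permMat_apply]
  rfl

theorem permMat_mul_permSum (σ : Equiv.Perm κ) : permMat d σ * permSum κ d = permSum κ d := by
  rw [permSum_eq_sum_permMat, Finset.mul_sum]
  simp_rw [permMat_mul_permMat]
  exact Fintype.sum_equiv (Equiv.mulRight σ) _ _ fun _ => rfl

theorem permSum_mul_permMat (σ : Equiv.Perm κ) : permSum κ d * permMat d σ = permSum κ d := by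
  rw [permSum_eq_sum_permMat, Finset.sum_mul]
  simp_rw [permMat_mul_permMat]
  exact Fintype.sum_equiv (Equiv.mulLeft σ) _ _ fun _ => rfl

theorem permSum_mul_self :
    permSum κ d * permSum κ d = (Fintype.card (Equiv.Perm κ) : ℂ) • permSum κ d := by
  conv_lhs => arg 2; rw [permSum_eq_sum_permMat]
  simp only [Finset.mul_sum, permSum_mul_permMat, Finset.sum_const, Finset.card_univ]
  exact (Nat.cast_smul_eq_nsmul ℂ _ _).symm

theorem isHermitian_permSum : (permSum κ d).IsHermitian := by
  rw [Matrix.IsHermitian, permSum_eq_sum_permMat, Matrix.conjTranspose_sum]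
  simp_rw [conjTranspose_permMat]
  exact Fintype.sum_equiv (Equiv.inv _) _ _ fun _ => rfl

end PermMat

section Symmetrizer

variable (κ : Type) [Fintype κ] [DecidableEq κ] (d : ℕ)

noncomputable def symmetrizer : Matrix (κ → Fin d) (κ → Fin d) ℂ :=
  (Fintype.card (Equiv.Perm κ) : ℂ)⁻¹ • permSum κ d

variable {κ d}

private theorem card_perm_ne_zero : (Fintype.card (Equiv.Perm κ) : ℂ) ≠ 0 :=
  Nat.cast_ne_zero.mpr Fintype.card_ne_zero

theorem symmetrizer_mul_permSum : symmetrizer κ d * permSum κ d = permSum κ d := by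
  rw [symmetrizer, Matrix.smul_mul, permSum_mul_self, smul_smul,
    inv_mul_cancel₀ card_perm_ne_zero, one_smul]

theorem permSum_mul_symmetrizer : permSum κ d * symmetrizer κ d = permSum κ d := by
  rw [symmetrizer, Matrix.mul_smul, permSum_mul_self, smul_smul,
    inv_mul_cancel₀ card_perm_ne_zero, one_smul]

theorem symmetrizer_mul_permMat (σ : Equiv.Perm κ) :
    symmetrizer κ d * permMat d σ = symmetrizer κ d := by
  rw [symmetrizer, Matrix.smul_mul, permSum_mul_permMat]

theorem isHermitian_symmetrizer : (symmetrizer κ d).IsHermitian := by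
  rw [Matrix.IsHermitian, symmetrizer, Matrix.conjTranspose_smul, isHermitian_permSum.eq,
    star_inv₀, star_natCast]

theorem conjTranspose_mul_self_mul_symmetrizer (B : Matrix (κ → Fin d) (κ → Fin d) ℂ) :
    (B * symmetrizer κ d)ᴴ * (B * symmetrizer κ d) =
      symmetrizer κ d * (Bᴴ * B) * symmetrizer κ d := by
  rw [Matrix.conjTranspose_mul, isHermitian_symmetrizer.eq]
  simp only [Matrix.mul_assoc]

end Symmetrizer

section TensorCopies

variable {d x y : ℕ}

theorem tensorCopies_eq_submatrix_kronecker (A : Matrix (Fin x → Fin d) (Fin x → Fin d) ℂ)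
    (B : Matrix (Fin y → Fin d) (Fin y → Fin d) ℂ) :
    tensorCopies A B = (A ⊗ₖ B).submatrix (Equiv.sumArrowEquivProdArrow _ _ _)
      (Equiv.sumArrowEquivProdArrow _ _ _) := rfl

theorem tensorCopies_mul (A A' : Matrix (Fin x → Fin d) (Fin x → Fin d) ℂ)
    (B B' : Matrix (Fin y → Fin d) (Fin y → Fin d) ℂ) :
    tensorCopies (A * A') (B * B') = tensorCopies A B * tensorCopies A' B' := by
  simp only [tensorCopies_eq_submatrix_kronecker, Matrix.submatrix_mul_equiv,
    Matrix.mul_kronecker_mul]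

theorem trace_tensorCopies (A : Matrix (Fin x → Fin d) (Fin x → Fin d) ℂ)
    (B : Matrix (Fin y → Fin d) (Fin y → Fin d) ℂ) :
    (tensorCopies A B).trace = A.trace * B.trace := by
  rw [← Matrix.trace_kronecker, tensorCopies_eq_submatrix_kronecker]
  exact Fintype.sum_equiv (Equiv.sumArrowEquivProdArrow _ _ _) _ _ fun _ => rfl

theorem tensorCopies_smul (c c' : ℂ) (A : Matrix (Fin x → Fin d) (Fin x → Fin d) ℂ)
    (B : Matrix (Fin y → Fin d) (Fin y → Fin d) ℂ) :
    tensorCopies (c • A) (c' • B) = (c * c') • tensorCopies A B := by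
  simp only [tensorCopies_eq_submatrix_kronecker, Matrix.smul_kronecker, Matrix.kronecker_smul,
    Matrix.submatrix_smul, smul_smul, mul_comm c']
  rfl

theorem tensorCopies_permMat (σ : Equiv.Perm (Fin x)) (τ : Equiv.Perm (Fin y)) :
    tensorCopies (permMat d σ) (permMat d τ) = permMat d (Equiv.sumCongr σ τ) := by
  ext z w
  simp only [tensorCopies, permMat, Matrix.of_apply, ite_zero_mul_ite_zero, mul_one]
  exact if_congr (by simp [funext_iff, Sum.forall]) rfl rfl

theorem tensorCopies_permSum :
    tensorCopies (permSum (Fin x) d) (permSum (Fin y) d) =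
      ∑ σ : Equiv.Perm (Fin x), ∑ τ : Equiv.Perm (Fin y), permMat d (Equiv.sumCongr σ τ) := by
  ext z w
  simp only [Matrix.sum_apply, ← tensorCopies_permMat]
  simp only [tensorCopies, Matrix.of_apply, permSum_eq_sum_permMat, Matrix.sum_apply,
    Finset.sum_mul_sum]

theorem tensorCopies_symmetrizer_mul_permSum :
    tensorCopies (symmetrizer (Fin x) d) (symmetrizer (Fin y) d) * permSum (Fin x ⊕ Fin y) d =
      permSum (Fin x ⊕ Fin y) d := by
  rw [symmetrizer, symmetrizer, tensorCopies_smul, tensorCopies_permSum, Matrix.smul_mul]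
  simp only [Finset.sum_mul, permMat_mul_permSum, Finset.sum_const, Finset.card_univ, smul_smul]
  rw [← Nat.cast_smul_eq_nsmul ℂ, smul_smul, Nat.cast_mul, mul_mul_mul_comm,
    inv_mul_cancel₀ card_perm_ne_zero, inv_mul_cancel₀ card_perm_ne_zero, one_mul, one_smul]

theorem permSum_mul_tensorCopies_symmetrizer :
    permSum (Fin x ⊕ Fin y) d * tensorCopies (symmetrizer (Fin x) d) (symmetrizer (Fin y) d) =
      permSum (Fin x ⊕ Fin y) d := by
  rw [symmetrizer, symmetrizer, tensorCopies_smul, tensorCopies_permSum, Matrix.mul_smul]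
  simp only [Finset.mul_sum, permSum_mul_permMat, Finset.sum_const, Finset.card_univ, smul_smul]
  rw [← Nat.cast_smul_eq_nsmul ℂ, smul_smul, Nat.cast_mul, mul_mul_mul_comm,
    inv_mul_cancel₀ card_perm_ne_zero, inv_mul_cancel₀ card_perm_ne_zero, one_mul, one_smul]

end TensorCopies

theorem Matrix.IsHermitian.im_trace_mul_eq_zero {n : Type*} [Fintype n]
    {A B : Matrix n n ℂ} (hA : A.IsHermitian) (hB : B.IsHermitian) : (A * B).trace.im = 0 := by
  have h : star (A * B).trace = (A * B).trace := by
    rw [← Matrix.trace_conjTranspose, Matrix.conjTranspose_mul, hA.eq, hB.eq, Matrix.trace_mul_comm]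
  exact Complex.conj_eq_iff_im.mp h

theorem Matrix.trace_mul_mul_mul_eq_of_absorbs {n R : Type*} [Fintype n] [CommSemiring R]
    {P S : Matrix n n R} (hPS : P * S = S) (hSP : S * P = S) (ρ : Matrix n n R) :
    (P * ρ * P * S).trace = (ρ * S).trace := by
  rw [Matrix.mul_assoc, hPS, Matrix.mul_assoc, Matrix.trace_mul_comm, Matrix.mul_assoc, hSP]

theorem sum_sum_sumCongr_le_sum {X Y M : Type*} [Fintype X] [Fintype Y] [DecidableEq X]
    [DecidableEq Y] [AddCommMonoid M] [PartialOrder M] [IsOrderedAddMonoid M]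
    {f : Equiv.Perm (X ⊕ Y) → M} (hf : ∀ π, 0 ≤ f π) :
    ∑ σ : Equiv.Perm X, ∑ τ : Equiv.Perm Y, f (Equiv.sumCongr σ τ) ≤ ∑ π, f π := by
  rw [← Fintype.sum_prod_type']
  calc ∑ στ : Equiv.Perm X × Equiv.Perm Y, f (Equiv.sumCongr στ.1 στ.2)
      = ∑ π ∈ Finset.univ.map ⟨_, Equiv.Perm.sumCongrHom_injective⟩, f π :=
        (Finset.sum_map Finset.univ ⟨_, Equiv.Perm.sumCongrHom_injective⟩ f).symm
    _ ≤ ∑ π, f π := Finset.sum_le_univ_sum_of_nonneg hf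

section Inequality

variable {d x y : ℕ}

theorem trace_mul_permSum_mul_trace_mul_permSum (A : Matrix (Fin x → Fin d) (Fin x → Fin d) ℂ)
    (B : Matrix (Fin y → Fin d) (Fin y → Fin d) ℂ) :
    (A * permSum (Fin x) d).trace * (B * permSum (Fin y) d).trace =
      ∑ σ : Equiv.Perm (Fin x), ∑ τ : Equiv.Perm (Fin y),
        (tensorCopies A B * permMat d (Equiv.sumCongr σ τ)).trace := by
  simp only [permSum_eq_sum_permMat, Matrix.mul_sum, Matrix.trace_sum, Finset.sum_mul_sum,
    ← trace_tensorCopies, tensorCopies_mul, tensorCopies_permMat]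

theorem trace_tensorCopies_mul_permMat_nonneg (C : Matrix (Fin x → Fin d) (Fin x → Fin d) ℂ)
    (D : Matrix (Fin y → Fin d) (Fin y → Fin d) ℂ) (hC : ∀ σ, C * permMat d σ = C)
    (hD : ∀ τ, D * permMat d τ = D) (π : Equiv.Perm (Fin x ⊕ Fin y)) :
    0 ≤ (tensorCopies (Cᴴ * C) (Dᴴ * D) * permMat d π).trace := by
  have hC' : ∀ k, PermInvariant (C k) := fun k σ a => by rw [← mul_permMat_apply C σ k a, hC]
  have hD' : ∀ l, PermInvariant (D l) := fun l τ b => by rw [← mul_permMat_apply D τ l b, hD]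
  simp only [trace_mul_permMat, tensorCopies, Matrix.of_apply, Matrix.mul_apply,
    Matrix.conjTranspose_apply, Finset.sum_mul_sum]
  rw [Finset.sum_comm]
  refine Finset.sum_nonneg fun k _ => ?_
  rw [Finset.sum_comm]
  refine Finset.sum_nonneg fun l _ => ?_
  convert sum_star_mul_comp_perm_nonneg (hC' k) (hD' l) π using 2
  simp only [comp_assoc, star_mul']
  ring

theorem trace_mul_permSum_mul_trace_mul_permSum_le
    (C : Matrix (Fin x → Fin d) (Fin x → Fin d) ℂ) (D : Matrix (Fin y → Fin d) (Fin y → Fin d) ℂ)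
    (hC : ∀ σ, C * permMat d σ = C) (hD : ∀ τ, D * permMat d τ = D) :
    (Cᴴ * C * permSum (Fin x) d).trace * (Dᴴ * D * permSum (Fin y) d).trace ≤
      (tensorCopies (Cᴴ * C) (Dᴴ * D) * permSum (Fin x ⊕ Fin y) d).trace := by
  rw [trace_mul_permSum_mul_trace_mul_permSum, permSum_eq_sum_permMat, Matrix.mul_sum,
    Matrix.trace_sum]
  exact sum_sum_sumCongr_le_sum
    (f := fun π => (tensorCopies (Cᴴ * C) (Dᴴ * D) * permMat d π).trace)
    (trace_tensorCopies_mul_permMat_nonneg C D hC hD)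

end Inequality

/-- **Superadditivity of permutation-sum traces.** For positive semidefinite
`ρx` on `x` copies and `ρy` on `y` copies of `C^d`,
`tr((ρx ⊗ ρy)·S_{x+y}) ≥ tr(ρx·S_x)·tr(ρy·S_y)`. -/
theorem trace_tensor_permSum_ge {d x y : ℕ}
    (ρx : Matrix (Fin x → Fin d) (Fin x → Fin d) ℂ)
    (ρy : Matrix (Fin y → Fin d) (Fin y → Fin d) ℂ)
    (hx : ρx.PosSemidef) (hy : ρy.PosSemidef) :
    ((ρx * permSum (Fin x) d).trace).re * ((ρy * permSum (Fin y) d).trace).re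
      ≤ ((tensorCopies ρx ρy * permSum (Fin x ⊕ Fin y) d).trace).re := by
  open scoped MatrixOrder in
  obtain ⟨Bx, hBx⟩ := CStarAlgebra.nonneg_iff_eq_star_mul_self.mp hx.nonneg
  open scoped MatrixOrder in
  obtain ⟨By, hBy⟩ := CStarAlgebra.nonneg_iff_eq_star_mul_self.mp hy.nonneg
  rw [Matrix.star_eq_conjTranspose] at hBx hBy
  have key := trace_mul_permSum_mul_trace_mul_permSum_le
    (Bx * symmetrizer (Fin x) d) (By * symmetrizer (Fin y) d)
    (fun σ => by rw [Matrix.mul_assoc, symmetrizer_mul_permMat])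
    (fun τ => by rw [Matrix.mul_assoc, symmetrizer_mul_permMat])
  rw [conjTranspose_mul_self_mul_symmetrizer, conjTranspose_mul_self_mul_symmetrizer, ← hBx, ← hBy,
    tensorCopies_mul, tensorCopies_mul,
    Matrix.trace_mul_mul_mul_eq_of_absorbs symmetrizer_mul_permSum permSum_mul_symmetrizer,
    Matrix.trace_mul_mul_mul_eq_of_absorbs symmetrizer_mul_permSum permSum_mul_symmetrizer,
    Matrix.trace_mul_mul_mul_eq_of_absorbs tensorCopies_symmetrizer_mul_permSum
      permSum_mul_tensorCopies_symmetrizer] at key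
  have him := hx.isHermitian.im_trace_mul_eq_zero isHermitian_permSum
  simpa [Complex.mul_re, him] using (Complex.le_def.mp key).1
end
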